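/- Finitary cut suffices: if a structure R is provable in SKS with unrestricted atomic cut ai↑, then R is provable in the system where every atomic cut instance ai↑: S(a,¬a) ⟹ S{f} satisfies the proviso that the atom a or ¬a occurs in the context S{ }. The proof proceeds by taking the bottommost violating cut instance and substituting t for a and f for ¬a in the subproof above its conclusion. -/

import Mathlib

/-- Structures of system SKS. -/
inductive Str : Type
  | f : Str
  | t : Str
  | atom (n : ℕ) : Str
  | or (A B : Str) : Str
  | and (A B : Str) : Str
  | neg (A : Str) : Str

/-- Positive contexts: a structure with one hole, not under a negation. -/
inductive Ctx : Type
  | hole : Ctx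
  | orl (S : Ctx) (T : Str) : Ctx
  | orr (T : Str) (S : Ctx) : Ctx
  | andl (S : Ctx) (T : Str) : Ctx
  | andr (T : Str) (S : Ctx) : Ctx

def Ctx.fill : Ctx → Str → Str
  | .hole, R => R
  | .orl S T, R => .or (S.fill R) T
  | .orr T S, R => .or T (S.fill R)
  | .andl S T, R => .and (S.fill R) T
  | .andr T S, R => .and T (S.fill R)

/-- Structural equivalence `=` of SKS. -/
inductive equiv : Str → Str → Prop
  | refl (R) : equiv R R
  | symm {A B} : equiv A B → equiv B A
  | trans {A B C} : equiv A B → equiv B C → equiv A C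
  | or_congr {A B C D} : equiv A B → equiv C D → equiv (.or A C) (.or B D)
  | and_congr {A B C D} : equiv A B → equiv C D → equiv (.and A C) (.and B D)
  | neg_congr {A B} : equiv A B → equiv (.neg A) (.neg B)
  | or_assoc (A B C) : equiv (.or (.or A B) C) (.or A (.or B C))
  | or_comm (A B) : equiv (.or A B) (.or B A)
  | and_assoc (A B C) : equiv (.and (.and A B) C) (.and A (.and B C))
  | and_comm (A B) : equiv (.and A B) (.and B A)
  | dm_or (A B) : equiv (.neg (.or A B)) (.and (.neg A) (.neg B))
  | dm_and (A B) : equiv (.neg (.and A B)) (.or (.neg A) (.neg B))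
  | neg_neg (A) : equiv (.neg (.neg A)) A
  | neg_f : equiv (.neg .f) .t
  | neg_t : equiv (.neg .t) .f
  | or_f (R) : equiv (.or .f R) R
  | and_t (R) : equiv (.and .t R) R
  | or_t_t : equiv (.or .t .t) .t
  | and_f_f : equiv (.and .f .f) .f

/-- One inference step of SKS, applied in an arbitrary positive context. -/
inductive step : Str → Str → Prop
  | ai_down (S : Ctx) (a : ℕ) :
      step (S.fill .t) (S.fill (.or (.atom a) (.neg (.atom a))))
  | ai_up (S : Ctx) (a : ℕ) :
      step (S.fill (.and (.atom a) (.neg (.atom a)))) (S.fill .f)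
  | s (S : Ctx) (R U T : Str) :
      step (S.fill (.and (.or R U) T)) (S.fill (.or (.and R T) U))
  | c_down (S : Ctx) (R : Str) : step (S.fill (.or R R)) (S.fill R)
  | c_up (S : Ctx) (R : Str) : step (S.fill R) (S.fill (.and R R))
  | w_down (S : Ctx) (R : Str) : step (S.fill .f) (S.fill R)
  | w_up (S : Ctx) (R : Str) : step (S.fill R) (S.fill .t)

/-- Derivations in SKS: chains of rule instances and equivalence steps. -/
inductive Deriv : Str → Str → Prop
  | refl (R) : Deriv R R
  | step {A B C} : step A B → Deriv B C → Deriv A C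
  | eq {A B C} : equiv A B → Deriv B C → Deriv A C

/-- The atom `a` (or its negation) occurs in a structure. -/
def occurs (a : ℕ) : Str → Prop
  | .f => False
  | .t => False
  | .atom n => n = a
  | .or A B => occurs a A ∨ occurs a B
  | .and A B => occurs a A ∨ occurs a B
  | .neg A => occurs a A

/-- The atom `a` or `¬a` occurs in the context `S{ }`. -/
def Ctx.occurs (a : ℕ) : Ctx → Prop
  | .hole => False
  | .orl S T => S.occurs a ∨ _root_.occurs a T
  | .orr T S => _root_.occurs a T ∨ S.occurs a
  | .andl S T => S.occurs a ∨ _root_.occurs a T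
  | .andr T S => _root_.occurs a T ∨ S.occurs a

/-- SKS steps where atomic cut is replaced by the finitary cut `fai↑`:
the atom `a` or `¬a` must occur in the surrounding context. -/
inductive stepF : Str → Str → Prop
  | ai_down (S : Ctx) (a : ℕ) :
      stepF (S.fill .t) (S.fill (.or (.atom a) (.neg (.atom a))))
  | fai_up (S : Ctx) (a : ℕ) (h : S.occurs a) :
      stepF (S.fill (.and (.atom a) (.neg (.atom a)))) (S.fill .f)
  | s (S : Ctx) (R U T : Str) :
      stepF (S.fill (.and (.or R U) T)) (S.fill (.or (.and R T) U))
  | c_down (S : Ctx) (R : Str) : stepF (S.fill (.or R R)) (S.fill R)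
  | c_up (S : Ctx) (R : Str) : stepF (S.fill R) (S.fill (.and R R))
  | w_down (S : Ctx) (R : Str) : stepF (S.fill .f) (S.fill R)
  | w_up (S : Ctx) (R : Str) : stepF (S.fill R) (S.fill .t)

inductive derivF : Str → Str → Prop
  | refl (R) : derivF R R
  | step {A B C} : stepF A B → derivF B C → derivF A C
  | eq {A B C} : equiv A B → derivF B C → derivF A C

/-!
A cut `S{a ∧ ¬a} ⟹ S{f}` whose atom `a` does not occur in `S{ }` can be dropped: substituting `t`
for `a` throughout a finitary proof of `S{a ∧ ¬a}` leaves `S{ }` unchanged and turns the cut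
formula into `t ∧ ¬t = f`, so it yields a finitary proof of `S{f}`. Substitution preserves finitary
proofs, since instances of `ai↓` and `fai↑` on `a` itself become structural equivalences and those
on other atoms keep their proviso. Eliminating the violating cuts one at a time from the top of the
SKS proof downwards gives the theorem.
-/

def Str.substTrue (a : ℕ) : Str → Str
  | .f => .f
  | .t => .t
  | .atom n => if n = a then .t else .atom n
  | .or A B => .or (A.substTrue a) (B.substTrue a)
  | .and A B => .and (A.substTrue a) (B.substTrue a)
  | .neg A => .neg (A.substTrue a)

def Ctx.substTrue (a : ℕ) : Ctx → Ctx
  | .hole => .hole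
  | .orl S T => .orl (S.substTrue a) (T.substTrue a)
  | .orr T S => .orr (T.substTrue a) (S.substTrue a)
  | .andl S T => .andl (S.substTrue a) (T.substTrue a)
  | .andr T S => .andr (T.substTrue a) (S.substTrue a)

section Substitution

variable {a b : ℕ}

theorem Ctx.fill_substTrue (S : Ctx) (X : Str) :
    (S.fill X).substTrue a = (S.substTrue a).fill (X.substTrue a) := by
  induction S <;> simp [Ctx.fill, Ctx.substTrue, Str.substTrue, *]

theorem Str.substTrue_eq_self {A : Str} (h : ¬ occurs a A) : A.substTrue a = A := by
  induction A <;> simp_all [occurs, Str.substTrue]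

theorem Ctx.substTrue_eq_self {S : Ctx} (h : ¬ S.occurs a) : S.substTrue a = S := by
  induction S <;> simp_all [Ctx.occurs, Ctx.substTrue, Str.substTrue_eq_self]

theorem occurs_substTrue_iff (hba : b ≠ a) {A : Str} : occurs b (A.substTrue a) ↔ occurs b A := by
  induction A with
  | atom n => by_cases hn : n = a <;> simp [Str.substTrue, occurs, hn]; omega
  | _ => simp_all [occurs, Str.substTrue]

theorem Ctx.occurs_substTrue_iff (hba : b ≠ a) {S : Ctx} :
    (S.substTrue a).occurs b ↔ S.occurs b := by
  induction S <;> simp_all [Ctx.occurs, Ctx.substTrue, _root_.occurs_substTrue_iff hba]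

theorem equiv.substTrue {A B : Str} (h : equiv A B) :
    equiv (A.substTrue a) (B.substTrue a) := by
  induction h with
  | refl => exact .refl _
  | symm _ ih => exact ih.symm
  | trans _ _ ih₁ ih₂ => exact ih₁.trans ih₂
  | or_congr _ _ ih₁ ih₂ => exact .or_congr ih₁ ih₂
  | and_congr _ _ ih₁ ih₂ => exact .and_congr ih₁ ih₂
  | neg_congr _ ih => exact .neg_congr ih
  | or_assoc => exact .or_assoc _ _ _
  | or_comm => exact .or_comm _ _
  | and_assoc => exact .and_assoc _ _ _
  | and_comm => exact .and_comm _ _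
  | dm_or => exact .dm_or _ _
  | dm_and => exact .dm_and _ _
  | neg_neg => exact .neg_neg _
  | neg_f => exact .neg_f
  | neg_t => exact .neg_t
  | or_f => exact .or_f _
  | and_t => exact .and_t _
  | or_t_t => exact .or_t_t
  | and_f_f => exact .and_f_f

end Substitution

theorem equiv.fill {X Y : Str} (S : Ctx) (h : equiv X Y) : equiv (S.fill X) (S.fill Y) := by
  induction S with
  | hole => exact h
  | orl S T ih => exact .or_congr ih (.refl T)
  | orr T S ih => exact .or_congr (.refl T) ih
  | andl S T ih => exact .and_congr ih (.refl T)
  | andr T S ih => exact .and_congr (.refl T) ih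

theorem equiv_and_t_neg_t : equiv (.and .t (.neg .t)) .f :=
  .trans (.and_congr (.refl _) .neg_t) (.and_t _)

theorem equiv_or_t_neg_t : equiv (.or .t (.neg .t)) .t :=
  .trans (.or_congr (.refl _) .neg_t) (.trans (.or_comm _ _) (.or_f _))

namespace derivF

theorem trans {A B C : Str} (h₁ : derivF A B) (h₂ : derivF B C) : derivF A C := by
  induction h₁ with
  | refl => exact h₂
  | step s _ ih => exact .step s (ih h₂)
  | eq e _ ih => exact .eq e (ih h₂)

theorem single {A B : Str} (h : stepF A B) : derivF A B :=
  .step h (.refl B)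

theorem tail {A B C : Str} (h : derivF A B) (s : stepF B C) : derivF A C :=
  h.trans (.single s)

theorem of_equiv {A B : Str} (h : equiv A B) : derivF A B :=
  .eq h (.refl B)

end derivF

theorem stepF.substTrue (a : ℕ) {A B : Str} (h : stepF A B) :
    derivF (A.substTrue a) (B.substTrue a) := by
  cases h with
  | ai_down S b =>
    simp only [Ctx.fill_substTrue, Str.substTrue]
    split_ifs with hba
    · exact .of_equiv (equiv_or_t_neg_t.symm.fill _)
    · exact .single (.ai_down _ b)
  | fai_up S b hb =>
    simp only [Ctx.fill_substTrue, Str.substTrue]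
    split_ifs with hba
    · exact .of_equiv (equiv_and_t_neg_t.fill _)
    · exact .single (.fai_up _ b ((Ctx.occurs_substTrue_iff hba).2 hb))
  | _ =>
    simp only [Ctx.fill_substTrue]
    exact .single (by constructor)

theorem derivF.substTrue (a : ℕ) {A B : Str} (h : derivF A B) :
    derivF (A.substTrue a) (B.substTrue a) := by
  induction h with
  | refl => exact .refl _
  | step s _ ih => exact (s.substTrue a).trans ih
  | eq e _ ih => exact .eq e.substTrue ih

theorem derivF.fill_f_of_not_occurs {S : Ctx} {a : ℕ}
    (h : derivF .t (S.fill (.and (.atom a) (.neg (.atom a))))) (hS : ¬ S.occurs a) :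
    derivF .t (S.fill .f) := by
  have h' := h.substTrue a
  simp only [Ctx.fill_substTrue, Ctx.substTrue_eq_self hS, Str.substTrue, if_true] at h'
  exact h'.trans (.of_equiv (equiv_and_t_neg_t.fill S))

theorem derivF.tail_step {A B : Str} (hA : derivF .t A) (h : _root_.step A B) : derivF .t B := by
  cases h with
  | ai_up S a =>
    by_cases hS : S.occurs a
    · exact hA.tail (.fai_up S a hS)
    · exact hA.fill_f_of_not_occurs hS
  | ai_down S a => exact hA.tail (.ai_down S a)
  | s S R U T => exact hA.tail (.s S R U T)
  | c_down S R => exact hA.tail (.c_down S R)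
  | c_up S R => exact hA.tail (.c_up S R)
  | w_down S R => exact hA.tail (.w_down S R)
  | w_up S R => exact hA.tail (.w_up S R)

theorem derivF.of_deriv {A B : Str} (hA : derivF .t A) (h : Deriv A B) : derivF .t B := by
  induction h with
  | refl => exact hA
  | step s _ ih => exact ih (hA.tail_step s)
  | eq e _ ih => exact ih (hA.trans (.of_equiv e))

/-- if `R` is provable in SKS with unrestricted atomic cut,
then `R` is provable in the system where every atomic cut is finitary. -/
theorem finitary_cut_suffices (R : Str) (h : Deriv .t R) : derivF .t R :=
  (derivF.refl .t).of_deriv h
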